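/- arXiv:2201.12472 — 2 statements merged into one kernel-verified Lean document; each statement's English description precedes it below -/
import Mathlib

section
/- Let (A_ξ)_{ξ<η} be an increasing sequence of subsets of a space X indexed by ordinals below a countable ordinal η, and extend it by setting A_η = X. Then x belongs to the increasing difference 𝔻_{ξ<η} A_ξ if and only if the parity of min{α ≤ η : x ∈ A_α} differs from the parity of η. -/
open Ordinal

/-- For an increasing ordinal-indexed sequence `(A ξ)_{ξ<η}` (with `A η = univ`),
`x ∈ 𝔻_{ξ<η} A ξ` iff the parity of `min {α ≤ η : x ∈ A α}` differs from the parity of `η`. -/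
theorem stmt2 {X : Type*} (η : Ordinal) (hcount : η.card ≤ Cardinal.aleph0)
    (A : Ordinal → Set X)
    (hmono : ∀ ξ ζ : Ordinal, ξ ≤ ζ → ζ ≤ η → A ξ ⊆ A ζ)
    (htop : A η = Set.univ) (x : X) :
    (x ∈ ⋃ ξ ∈ {ξ : Ordinal | ξ < η ∧ ξ % 2 ≠ η % 2},
        (A ξ \ ⋃ γ ∈ {γ : Ordinal | γ < ξ}, A γ))
      ↔ (sInf {α : Ordinal | α ≤ η ∧ x ∈ A α}) % 2 ≠ η % 2 := by
  set S : Set Ordinal := {α : Ordinal | α ≤ η ∧ x ∈ A α} with hS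
  have hne : S.Nonempty := ⟨η, le_rfl, by simp [htop]⟩
  have hmem : sInf S ∈ S := csInf_mem hne
  have hle : sInf S ≤ η := hmem.1
  have hnot : ∀ γ < sInf S, x ∉ A γ := by
    intro γ hγ hx
    exact absurd (csInf_le' (show γ ∈ S from ⟨le_of_lt (lt_of_lt_of_le hγ hle), hx⟩)) (not_le.mpr hγ)
  constructor
  · rintro h
    simp only [Set.mem_iUnion, Set.mem_diff, Set.mem_setOf_eq] at h
    obtain ⟨ξ, hp, hxξ, hnotx⟩ := h
    obtain ⟨hξη, hpar⟩ := hp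
    have h1 : sInf S ≤ ξ := csInf_le' (show ξ ∈ S from ⟨le_of_lt hξη, hxξ⟩)
    have h2 : ¬ sInf S < ξ := by
      intro hlt
      exact hnotx ⟨sInf S, hlt, hmem.2⟩
    have : sInf S = ξ := le_antisymm h1 (not_lt.mp h2)
    rwa [this]
  · intro hpar
    have hlt : sInf S < η := lt_of_le_of_ne hle (fun h => hpar (by rw [h]))
    simp only [Set.mem_iUnion, Set.mem_diff, Set.mem_setOf_eq]
    refine ⟨sInf S, ⟨hlt, hpar⟩, hmem.2, ?_⟩
    rintro ⟨γ, hγlt, hxγ⟩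
    exact hnot γ hγlt hxγ
end

section
/- Let X, Y be sets, W ⊆ X, η an infinite ordinal, and for each α ∈ W let (P̌_{α,ξ})_{ξ<η} be decreasing sequences of subsets of Y (sections of global sets P̌_ξ ⊆ X×Y) with Y \ A_α = 𝔻*_{ξ<η} P̌_{α,ξ}. Define Q̌_0 = X × Y, Q̌_1 = W × Y, and Q̌_{2+ξ} = (W × Y) ∩ P̌_ξ for ξ < η. Then (Q̌_ξ)_{ξ<η} is decreasing and 𝔻*_{ξ<η} Q̌_ξ = (X × Y) \ ⨆_{α∈W} A_α, i.e., the complement of {(α,y) : α ∈ W, y ∈ A_α}. -/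
/-!
Above its first two terms, `Q` is `P̌` shifted by two places. The shift preserves parity, and
since `η` is infinite it keeps indices below `η`. Hence for `α ∈ W` the greatest index of
`(α, y)` in `Q` is `2 + m` when `m` is the greatest index of `y` in the sections
`P̌_{α,ξ}`, and it is the odd index `1` when there is no such `m`; for `α ∉ W` it is `0`.
-/

/-- The decreasing difference of an ordinal-indexed decreasing sequence:
`x ∈ ddiffOrd η B` iff `{ξ < η : x ∈ B ξ}` has a greatest element which is even. -/
def ddiffOrd {X : Type*} (η : Ordinal) (B : Ordinal → Set X) : Set X :=
  {x | ∃ m, IsGreatest {ξ : Ordinal | ξ < η ∧ x ∈ B ξ} m ∧ m % 2 = 0}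

open Ordinal

theorem Ordinal.two_add_lt_of_omega0_le {η ξ : Ordinal} (hη : ω ≤ η) (hξ : ξ < η) :
    2 + ξ < η := by
  rcases lt_or_ge ξ ω with h | h
  · exact (isPrincipal_add_omega0 (by exact_mod_cast natCast_lt_omega0 2) h).trans_le hη
  · rwa [show (2 : Ordinal) = (2 : ℕ) from rfl, natCast_add_of_omega0_le h]

theorem Ordinal.two_add_mod_two (m : Ordinal) : (2 + m) % 2 = m % 2 := by
  simpa using mul_add_mod_self 2 1 m

theorem Ordinal.eq_zero_or_eq_one_or_exists_two_add (ζ : Ordinal) :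
    ζ = 0 ∨ ζ = 1 ∨ ∃ ξ, ζ = 2 + ξ := by
  rcases lt_or_ge ζ 2 with h | h
  · rw [Order.lt_two_iff, Order.le_one_iff] at h
    tauto
  · exact Or.inr (Or.inr ⟨ζ - 2, (Ordinal.add_sub_cancel_of_le h).symm⟩)

section ShiftByTwo

variable {X Y : Type*} {η : Ordinal} {B : Ordinal → Set X} {C : Ordinal → Set Y} {x : X} {y : Y}

theorem isGreatest_two_add_iff (hη : ω ≤ η) (hCB : ∀ ξ, y ∈ C (2 + ξ) ↔ x ∈ B ξ)
    (m : Ordinal) :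
    IsGreatest {ζ | ζ < η ∧ y ∈ C ζ} (2 + m) ↔ IsGreatest {ξ | ξ < η ∧ x ∈ B ξ} m := by
  constructor
  · rintro ⟨⟨hlt, hmem⟩, hub⟩
    refine ⟨⟨le_add_self.trans_lt hlt, (hCB m).1 hmem⟩, fun ξ ⟨hξ, hx⟩ => ?_⟩
    exact (add_le_add_iff_left 2).1 (hub ⟨two_add_lt_of_omega0_le hη hξ, (hCB ξ).2 hx⟩)
  · rintro ⟨⟨hlt, hmem⟩, hub⟩
    refine ⟨⟨two_add_lt_of_omega0_le hη hlt, (hCB m).2 hmem⟩, fun ζ ⟨hζ, hy⟩ => ?_⟩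
    obtain rfl | rfl | ⟨ξ, rfl⟩ := eq_zero_or_eq_one_or_exists_two_add ζ
    · exact zero_le
    · exact one_le_two.trans le_self_add
    · exact (add_le_add_iff_left 2).2 (hub ⟨le_add_self.trans_lt hζ, (hCB ξ).1 hy⟩)

theorem mem_ddiffOrd_iff_of_two_add (hη : ω ≤ η) (hC1 : y ∈ C 1)
    (hCB : ∀ ξ, y ∈ C (2 + ξ) ↔ x ∈ B ξ) : y ∈ ddiffOrd η C ↔ x ∈ ddiffOrd η B := by
  constructor
  · rintro ⟨M, hM, hMeven⟩
    obtain rfl | rfl | ⟨m, rfl⟩ := eq_zero_or_eq_one_or_exists_two_add M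
    · exact absurd (hM.2 ⟨one_lt_omega0.trans_le hη, hC1⟩) (by simp)
    · exact absurd hMeven (by rw [mod_eq_of_lt one_lt_two]; exact one_ne_zero)
    · exact ⟨m, (isGreatest_two_add_iff hη hCB m).1 hM, two_add_mod_two m ▸ hMeven⟩
  · rintro ⟨m, hm, hmeven⟩
    exact ⟨2 + m, (isGreatest_two_add_iff hη hCB m).2 hm, (two_add_mod_two m).trans hmeven⟩

theorem mem_ddiffOrd_of_forall_ne_zero_notMem (hη : 0 < η) (hC0 : y ∈ C 0)
    (hC : ∀ ζ ≠ 0, y ∉ C ζ) : y ∈ ddiffOrd η C :=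
  ⟨0, ⟨⟨hη, hC0⟩, fun ζ ⟨_, hζ⟩ => (by_contra fun h => hC ζ h hζ : ζ = 0).le⟩, zero_mod 2⟩

end ShiftByTwo

section ShiftedSequence

variable {X Y : Type*} {W : Set X} {Pc Q : Ordinal → Set (X × Y)}

theorem subset_prod_univ_of_ne_zero (hQ1 : Q 1 = W ×ˢ (Set.univ : Set Y))
    (hQ2 : ∀ ξ : Ordinal, Q (2 + ξ) = (W ×ˢ (Set.univ : Set Y)) ∩ Pc ξ) {ζ : Ordinal}
    (hζ : ζ ≠ 0) : Q ζ ⊆ W ×ˢ Set.univ := by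
  obtain rfl | rfl | ⟨ξ, rfl⟩ := eq_zero_or_eq_one_or_exists_two_add ζ
  · exact absurd rfl hζ
  · exact hQ1.subset
  · exact hQ2 ξ ▸ Set.inter_subset_left

theorem subset_of_le_of_lt {η : Ordinal} (hQ0 : Q 0 = Set.univ)
    (hQ1 : Q 1 = W ×ˢ (Set.univ : Set Y))
    (hQ2 : ∀ ξ : Ordinal, Q (2 + ξ) = (W ×ˢ (Set.univ : Set Y)) ∩ Pc ξ)
    (hdec : ∀ α ∈ W, ∀ ξ ζ : Ordinal, ξ ≤ ζ → ζ < η →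
      {y : Y | (α, y) ∈ Pc ζ} ⊆ {y : Y | (α, y) ∈ Pc ξ})
    (ξ ζ : Ordinal) (hξζ : ξ ≤ ζ) (hζ : ζ < η) : Q ζ ⊆ Q ξ := by
  obtain rfl | rfl | ⟨ξ, rfl⟩ := eq_zero_or_eq_one_or_exists_two_add ξ
  · exact hQ0 ▸ Set.subset_univ _
  · exact hQ1 ▸ subset_prod_univ_of_ne_zero hQ1 hQ2 (one_pos.trans_le hξζ).ne'
  · obtain ⟨ζ, rfl⟩ : ∃ ζ', ζ = 2 + ζ' :=
      ⟨ζ - 2, (Ordinal.add_sub_cancel_of_le (le_self_add.trans hξζ)).symm⟩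
    rw [hQ2, hQ2]
    rintro ⟨α, y⟩ ⟨hαy, hP⟩
    exact ⟨hαy, hdec α hαy.1 ξ ζ ((add_le_add_iff_left 2).1 hξζ) (le_add_self.trans_lt hζ) hP⟩

end ShiftedSequence

/-- If `η` is infinite and `(A α)ᶜ = 𝔻*_{ξ<η} (P̌_ξ)^{[α]}` for each `α ∈ W`
(sections decreasing), then with `Q̌_0 = X × Y`, `Q̌_1 = W × Y`, and
`Q̌_{2+ξ} = (W × Y) ∩ P̌_ξ`, the sequence `(Q̌_ζ)_{ζ<η}` is decreasing and
`𝔻*_{ζ<η} Q̌_ζ = (X × Y) \ ⨆_{α∈W} A_α`. -/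
theorem stmt12 {X Y : Type*} (η : Ordinal) (hη : Ordinal.omega0 ≤ η)
    (W : Set X) (A : X → Set Y) (Pc : Ordinal → Set (X × Y))
    (hdec : ∀ α ∈ W, ∀ ξ ζ : Ordinal, ξ ≤ ζ → ζ < η →
      {y : Y | (α, y) ∈ Pc ζ} ⊆ {y : Y | (α, y) ∈ Pc ξ})
    (hA : ∀ α ∈ W, (A α)ᶜ = ddiffOrd η (fun ξ => {y : Y | (α, y) ∈ Pc ξ}))
    (Q : Ordinal → Set (X × Y))
    (hQ0 : Q 0 = Set.univ) (hQ1 : Q 1 = W ×ˢ (Set.univ : Set Y))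
    (hQ2 : ∀ ξ : Ordinal, Q (2 + ξ) = (W ×ˢ (Set.univ : Set Y)) ∩ Pc ξ) :
    (∀ ξ ζ : Ordinal, ξ ≤ ζ → ζ < η → Q ζ ⊆ Q ξ) ∧
    ddiffOrd η Q = {p : X × Y | p.1 ∈ W ∧ p.2 ∈ A p.1}ᶜ := by
  refine ⟨subset_of_le_of_lt hQ0 hQ1 hQ2 hdec, ?_⟩
  ext ⟨α, y⟩
  by_cases hα : α ∈ W
  · have hshift : (α, y) ∈ ddiffOrd η Q ↔ y ∈ (A α)ᶜ := by
      rw [hA α hα]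
      refine mem_ddiffOrd_iff_of_two_add hη (hQ1 ▸ ⟨hα, trivial⟩) fun ξ => ?_
      simp [hQ2, hα]
    simpa [hα] using hshift
  · have hmem : (α, y) ∈ ddiffOrd η Q :=
      mem_ddiffOrd_of_forall_ne_zero_notMem (omega0_pos.trans_le hη) (hQ0 ▸ trivial)
        fun ζ hζ h => hα (subset_prod_univ_of_ne_zero hQ1 hQ2 hζ h).1
    simp [hα, hmem]
end
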